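/- Let Θ be a non-constant inner function, ψ₁, ψ₂ ∈ K_Θ, and φ = ψ₁ + ψ₂·conj(Θ). Then ‖ψ₁ - conj(Θ(0))·ψ₂‖ / (1 - |Θ(0)|²)^{1/2} ≤ ‖A_φ‖. -/

import Mathlib

open MeasureTheory Complex Filter
open scoped ENNReal

noncomputable section

instance : Fact (0 < 2 * Real.pi) := ⟨by positivity⟩

/-- The circle group `ℝ / 2πℤ`, parametrizing the unit circle `∂𝔻`. -/
abbrev 𝕋 := AddCircle (2 * Real.pi)

/-- Normalized arclength (Haar) measure `|dζ|/2π` on the circle. -/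
abbrev μT : Measure 𝕋 := AddCircle.haarAddCircle

/-- The boundary point `e^{iθ} ∈ ∂𝔻` corresponding to `θ : 𝕋`. -/
def bz (θ : 𝕋) : ℂ := (AddCircle.toCircle θ : ℂ)

/-- The `L²(∂𝔻, |dζ|/2π)` inner product `⟨f, g⟩ = ∫ f conj(g)`. -/
def ip (f g : 𝕋 → ℂ) : ℂ := ∫ θ, f θ * (starRingEnd ℂ) (g θ) ∂μT

/-- The `L²(∂𝔻, |dζ|/2π)` norm. -/
def nrm2 (f : 𝕋 → ℂ) : ℝ := (∫ θ, ‖f θ‖ ^ 2 ∂μT) ^ (1 / 2 : ℝ)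

/-- The essential supremum (`L^∞`) norm on `∂𝔻`. -/
def nrmInf (f : 𝕋 → ℂ) : ℝ := (eLpNorm f ⊤ μT).toReal

/-- `f` belongs to the Hardy space `H²`, viewed via boundary values: `f ∈ L²` and all
negatively-indexed Fourier coefficients vanish. -/
def MemH2 (f : 𝕋 → ℂ) : Prop :=
  MemLp f 2 μT ∧ ∀ n : ℤ, n < 0 → fourierCoeff f n = 0

/-- An inner function, recorded through its boundary values: an `H²` function which is
unimodular a.e. on `∂𝔻`. -/
structure InnerFn where
  toFun : 𝕋 → ℂ
  memH2 : MemH2 toFun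
  unimod : ∀ᵐ θ ∂μT, ‖toFun θ‖ = 1

/-- The Poisson extension `𝔓f` of a boundary function `f` at a point `l` of `𝔻`. -/
def poisson (f : 𝕋 → ℂ) (l : ℂ) : ℂ :=
  ∫ θ, (((1 - ‖l‖ ^ 2) / ‖bz θ - l‖ ^ 2 : ℝ) : ℂ) * f θ ∂μT

/-- The value `Θ(l)` of an inner function at a point `l ∈ 𝔻`, recovered from its
boundary values by the Poisson integral. -/
def InnerFn.dval (Θ : InnerFn) (l : ℂ) : ℂ := poisson Θ.toFun l

/-- `Θ` is a non-constant inner function. -/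
def InnerFn.NonConst (Θ : InnerFn) : Prop := ¬ ∃ c : ℂ, ∀ᵐ θ ∂μT, Θ.toFun θ = c

/-- Membership in the model space `K_Θ = H² ⊖ ΘH²`: `f ∈ H²` and `f ⟂ Θg` for all `g ∈ H²`. -/
def MemK (Θ : InnerFn) (f : 𝕋 → ℂ) : Prop :=
  MemH2 f ∧ ∀ g : 𝕋 → ℂ, MemH2 g → ip f (fun θ => Θ.toFun θ * g θ) = 0

/-- `p` is the orthogonal projection `P_Θ(u)` of `u ∈ L²` onto the model space `K_Θ`:
`p ∈ K_Θ` and `u - p ⟂ K_Θ`. -/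
def IsProjK (Θ : InnerFn) (u p : 𝕋 → ℂ) : Prop :=
  MemK Θ p ∧ ∀ k : 𝕋 → ℂ, MemK Θ k → ip (fun θ => u θ - p θ) k = 0

/-- The norm (possibly `∞`) of the truncated Toeplitz operator `A_φ f = P_Θ(φ f)`,
densely defined on `K_Θ^∞ = K_Θ ∩ H^∞`: the supremum of `‖P_Θ(φ f)‖` over unit vectors
`f ∈ K_Θ ∩ H^∞`. -/
def ttNorm (Θ : InnerFn) (φ : 𝕋 → ℂ) : ℝ≥0∞ :=
  sSup {c : ℝ≥0∞ | ∃ f p : 𝕋 → ℂ, MemK Θ f ∧ MemLp f ⊤ μT ∧ nrm2 f = 1 ∧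
    IsProjK Θ (fun θ => φ θ * f θ) p ∧ c = ENNReal.ofReal (nrm2 p)}

/-- The reproducing kernel `k_λ(z) = (1 - conj(Θ(λ))Θ(z))/(1 - conj(λ)z)` of `K_Θ`,
as a boundary function. -/
def kfun (Θ : InnerFn) (l : ℂ) (θ : 𝕋) : ℂ :=
  (1 - (starRingEnd ℂ) (Θ.dval l) * Θ.toFun θ) / (1 - (starRingEnd ℂ) l * bz θ)

/-- The Stolz (nontangential approach) region at a boundary point `z0 ∈ ∂𝔻` with
aperture `κ`. -/
def stolzAt (z0 : ℂ) (κ : ℝ) : Set ℂ := {z : ℂ | ‖z‖ < 1 ∧ ‖z - z0‖ < κ * (1 - ‖z‖)}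

/-- `f` has nontangential limit `L` at the boundary point `z0`. -/
def NTLim (f : ℂ → ℂ) (z0 L : ℂ) : Prop :=
  ∀ κ : ℝ, 1 < κ → Tendsto f (nhdsWithin z0 (stolzAt z0 κ)) (nhds L)

/-- `Θ` has a finite angular derivative at `ζ ∈ ∂𝔻`, with nontangential boundary value `w`
(of modulus one) and angular derivative `w'`: equivalently, `(Θ(z) - w)/(z - ζ)` has
nontangential limit `w'` at `ζ`. -/
def HasAngularDeriv (Θ : InnerFn) (ζ w w' : ℂ) : Prop :=
  ‖w‖ = 1 ∧ NTLim Θ.dval ζ w ∧ NTLim (fun z => (Θ.dval z - w) / (z - ζ)) ζ w'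

end

/-!
The test vector is the normalized reproducing kernel of `K_Θ` at the origin,
`k₀ = 1 - conj(Θ(0)) Θ`, for which `‖k₀‖² = 1 - |Θ(0)|²`. Since `|Θ| = 1` on the circle,
`φ k₀ = (ψ₁ - conj(Θ(0)) ψ₂) + ψ₂ conj(Θ) - conj(Θ(0)) Θ ψ₁`, and the last two terms are
orthogonal to `K_Θ`: `⟨ψ₂ conj(Θ), k⟩ = ⟨ψ₂, Θ k⟩` and `K_Θ ⟂ Θ H²`. Hence
`A_φ (k₀ / ‖k₀‖) = (ψ₁ - conj(Θ(0)) ψ₂) / ‖k₀‖`.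
-/

open scoped ComplexConjugate

section Fourier

variable {T : ℝ} [Fact (0 < T)]

theorem fourierCoeff_zero_eq_integral (f : AddCircle T → ℂ) :
    fourierCoeff f 0 = ∫ t, f t ∂AddCircle.haarAddCircle := by
  simp [fourierCoeff]

theorem fourierCoeff_conj (f : AddCircle T → ℂ) (n : ℤ) :
    fourierCoeff (fun t => conj (f t)) n = conj (fourierCoeff f (-n)) := by
  simp only [fourierCoeff, neg_neg, ← integral_conj, smul_eq_mul, map_mul, fourier_neg]

theorem fourierCoeff_const (a : ℂ) {n : ℤ} (hn : n ≠ 0) :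
    fourierCoeff (fun _ : AddCircle T => a) n = 0 := by
  have h := fourierCoeff.const_mul (fourier 0 : C(AddCircle T, ℂ)) a n
  simp only [fourier_zero, mul_one] at h
  simp [h, fourierCoeff_fourier, hn]

end Fourier

section L2

variable {α : Type*} [MeasurableSpace α] {μ : Measure α}

theorem MeasureTheory.MemLp.integrable_mul_conj {f g : α → ℂ} (hf : MemLp f 2 μ)
    (hg : MemLp g 2 μ) :
    Integrable (fun x => f x * conj (g x)) μ :=
  (hf.integrable_mul hg.star :)

theorem MeasureTheory.Integrable.conj {f : α → ℂ} (hf : Integrable f μ) :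
    Integrable (fun x => conj (f x)) μ :=
  memLp_one_iff_integrable.1 (memLp_one_iff_integrable.2 hf).star

end L2

section Hardy

variable {f g : 𝕋 → ℂ}

theorem MemH2.add (hf : MemH2 f) (hg : MemH2 g) : MemH2 (fun θ => f θ + g θ) := by
  refine ⟨hf.1.add hg.1, fun n hn => ?_⟩
  rw [show (fun θ => f θ + g θ) = f + g from rfl,
    fourierCoeff.add (hf.1.integrable one_le_two) (hg.1.integrable one_le_two)]
  simp [hf.2 n hn, hg.2 n hn]

theorem MemH2.const_mul (hf : MemH2 f) (a : ℂ) : MemH2 (fun θ => a * f θ) :=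
  ⟨hf.1.const_mul a, fun n hn => by rw [fourierCoeff.const_mul, hf.2 n hn, mul_zero]⟩

theorem memH2_const (a : ℂ) : MemH2 (fun _ => a) :=
  ⟨memLp_const a, fun _ hn => fourierCoeff_const a hn.ne⟩

/-- Parseval's identity pairs `f̂(-n)` with `ĝ(n)`; for `f, g ∈ H²` only `n = 0` survives. -/
theorem MemH2.integral_mul (hf : MemH2 f) (hg : MemH2 g) :
    ∫ θ, f θ * g θ ∂μT = fourierCoeff f 0 * fourierCoeff g 0 := by
  set X := hf.1.star.toLp
  set Y := hg.1.toLp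
  have hX : ∀ n, inner ℂ X (fourierBasis n) = fourierCoeff f (-n) := fun n => by
    rw [← inner_conj_symm, ← HilbertBasis.repr_apply_apply, fourierBasis_repr,
      fourierCoeff_congr_ae hf.1.star.coeFn_toLp]
    exact (congrArg conj (fourierCoeff_conj f n)).trans (Complex.conj_conj _)
  have hY : ∀ n, inner ℂ (fourierBasis n) Y = fourierCoeff g n := fun n => by
    rw [← HilbertBasis.repr_apply_apply, fourierBasis_repr,
      fourierCoeff_congr_ae hg.1.coeFn_toLp]
  have hXY : inner ℂ X Y = ∫ θ, f θ * g θ ∂μT := by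
    rw [MeasureTheory.L2.inner_def]
    refine integral_congr_ae ?_
    filter_upwards [hf.1.star.coeFn_toLp, hg.1.coeFn_toLp] with θ hXθ hYθ
    simp [X, Y, hXθ, hYθ, mul_comm]
  rw [← hXY, ← fourierBasis.tsum_inner_mul_inner, tsum_eq_single 0, hX, hY, neg_zero]
  intro n hn
  rw [hX, hY]
  rcases hn.lt_or_gt with hn | hn
  · rw [hg.2 n hn, mul_zero]
  · rw [hf.2 (-n) (neg_lt_zero.mpr hn), zero_mul]

end Hardy

namespace InnerFn

variable (Θ : InnerFn)

theorem memLp_top : MemLp Θ.toFun ⊤ μT :=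
  memLp_top_of_bound Θ.memH2.1.1 1 (Θ.unimod.mono fun _ h => h.le)

theorem mul_conj_ae : ∀ᵐ θ ∂μT, Θ.toFun θ * conj (Θ.toFun θ) = 1 := by
  filter_upwards [Θ.unimod] with θ h
  rw [Complex.mul_conj', h]
  norm_num

theorem dval_zero : Θ.dval 0 = ∫ θ, Θ.toFun θ ∂μT := by
  simp [InnerFn.dval, poisson, bz, Circle.norm_coe]

variable {Θ} {f : 𝕋 → ℂ}

theorem memLp_mul (hf : MemLp f 2 μT) : MemLp (fun θ => Θ.toFun θ * f θ) 2 μT :=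
  hf.mul' Θ.memLp_top

theorem memLp_mul_conj (hf : MemLp f 2 μT) : MemLp (fun θ => f θ * conj (Θ.toFun θ)) 2 μT :=
  Θ.memLp_top.star.mul' hf

end InnerFn

section InnerProduct

variable {f f' g h : 𝕋 → ℂ}

theorem ip_congr_ae_left (hf : f =ᵐ[μT] f') : ip f g = ip f' g :=
  integral_congr_ae (hf.mono fun θ hθ => by simp only [hθ])

theorem ip_add_left (hf : MemLp f 2 μT) (hg : MemLp g 2 μT) (hh : MemLp h 2 μT) :
    ip (fun θ => f θ + g θ) h = ip f h + ip g h := by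
  simp only [ip, add_mul]
  exact integral_add (hf.integrable_mul_conj hh) (hg.integrable_mul_conj hh)

theorem ip_const_mul_left (a : ℂ) (f h : 𝕋 → ℂ) : ip (fun θ => a * f θ) h = a * ip f h := by
  simp only [ip, mul_assoc, integral_const_mul]

theorem conj_ip (f g : 𝕋 → ℂ) : conj (ip g f) = ip f g := by
  simp only [ip, ← integral_conj, map_mul, Complex.conj_conj, mul_comm]

theorem ip_mul_conj_left (f u h : 𝕋 → ℂ) :
    ip (fun θ => f θ * conj (u θ)) h = ip f (fun θ => u θ * h θ) := by
  simp only [ip, map_mul, mul_assoc]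

theorem nrm2_const_mul (a : ℂ) (f : 𝕋 → ℂ) : nrm2 (fun θ => a * f θ) = ‖a‖ * nrm2 f := by
  simp only [nrm2, ← Real.sqrt_eq_rpow, norm_mul, mul_pow, integral_const_mul,
    Real.sqrt_mul (sq_nonneg _), Real.sqrt_sq (norm_nonneg a)]

end InnerProduct

section ModelSpace

variable {Θ : InnerFn} {f g u p : 𝕋 → ℂ}

theorem MemK.add (hf : MemK Θ f) (hg : MemK Θ g) : MemK Θ (fun θ => f θ + g θ) := by
  refine ⟨hf.1.add hg.1, fun h hh => ?_⟩
  rw [ip_add_left hf.1.1 hg.1.1 (InnerFn.memLp_mul hh.1), hf.2 h hh, hg.2 h hh, add_zero]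

theorem MemK.const_mul (hf : MemK Θ f) (a : ℂ) : MemK Θ (fun θ => a * f θ) :=
  ⟨hf.1.const_mul a, fun h hh => by rw [ip_const_mul_left, hf.2 h hh, mul_zero]⟩

theorem MemK.sub (hf : MemK Θ f) (hg : MemK Θ g) : MemK Θ (fun θ => f θ - g θ) := by
  simpa [sub_eq_add_neg] using hf.add (hg.const_mul (-1))

theorem IsProjK.const_mul (hp : IsProjK Θ u p) (a : ℂ) :
    IsProjK Θ (fun θ => a * u θ) (fun θ => a * p θ) := by
  refine ⟨hp.1.const_mul a, fun k hk => ?_⟩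
  simp only [← mul_sub]
  rw [ip_const_mul_left, hp.2 k hk, mul_zero]

end ModelSpace

section Kernel

variable (Θ : InnerFn)

theorem kfun_zero : kfun Θ 0 = fun θ => 1 - conj (Θ.dval 0) * Θ.toFun θ := by
  funext θ
  simp [kfun]

theorem memLp_top_kfun_zero : MemLp (kfun Θ 0) ⊤ μT := by
  rw [kfun_zero]
  exact (memLp_const 1).sub (Θ.memLp_top.const_mul _)

theorem memK_kfun_zero : MemK Θ (kfun Θ 0) := by
  set c := Θ.dval 0
  refine ⟨?_, fun g hg => ?_⟩
  · rw [kfun_zero]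
    simpa [sub_eq_add_neg] using (memH2_const 1).add (Θ.memH2.const_mul (-conj c))
  have hΘg : ∫ θ, Θ.toFun θ * g θ ∂μT = c * ∫ θ, g θ ∂μT := by
    rw [Θ.memH2.integral_mul hg, fourierCoeff_zero_eq_integral, fourierCoeff_zero_eq_integral,
      ← Θ.dval_zero]
  have hint : ∀ {v : 𝕋 → ℂ}, MemLp v 2 μT → Integrable (fun θ => conj (v θ)) μT :=
    fun hv => (hv.integrable one_le_two).conj
  calc ip (kfun Θ 0) (fun θ => Θ.toFun θ * g θ)
      = ∫ θ, conj (Θ.toFun θ * g θ) - conj c * conj (g θ) ∂μT := by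
        refine integral_congr_ae ?_
        filter_upwards [Θ.mul_conj_ae] with θ hθ
        rw [kfun_zero, map_mul]
        linear_combination (-conj c * conj (g θ)) * hθ
    _ = conj (∫ θ, Θ.toFun θ * g θ ∂μT) - conj c * conj (∫ θ, g θ ∂μT) := by
        rw [integral_sub (hint (InnerFn.memLp_mul hg.1)) ((hint hg.1).const_mul _),
          integral_const_mul, integral_conj, integral_conj]
    _ = 0 := by rw [hΘg, map_mul]; ring

theorem integral_norm_sq_kfun_zero :
    ∫ θ, ‖kfun Θ 0 θ‖ ^ 2 ∂μT = 1 - ‖Θ.dval 0‖ ^ 2 := by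
  set c := Θ.dval 0
  have hΘ := Θ.memH2.1.integrable one_le_two
  apply Complex.ofReal_injective
  calc ((∫ θ, ‖kfun Θ 0 θ‖ ^ 2 ∂μT : ℝ) : ℂ)
      = ∫ θ, (1 + c * conj c) - conj c * Θ.toFun θ - c * conj (Θ.toFun θ) ∂μT := by
        rw [← integral_complex_ofReal]
        refine integral_congr_ae ?_
        filter_upwards [Θ.mul_conj_ae] with θ hθ
        push_cast
        rw [← Complex.mul_conj', kfun_zero]
        simp only [map_sub, map_mul, map_one, Complex.conj_conj]
        linear_combination (c * conj c) * hθ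
    _ = (1 + c * conj c) - conj c * c - c * conj c := by
        rw [integral_sub ((integrable_const _).sub' (hΘ.const_mul _)) (hΘ.conj.const_mul _),
          integral_sub (integrable_const _) (hΘ.const_mul _), integral_const, probReal_univ,
          one_smul, integral_const_mul, integral_const_mul, integral_conj, ← Θ.dval_zero]
    _ = ((1 - ‖c‖ ^ 2 : ℝ) : ℂ) := by
        push_cast
        rw [← Complex.mul_conj']
        ring

theorem nrm2_kfun_zero : nrm2 (kfun Θ 0) = √(1 - ‖Θ.dval 0‖ ^ 2) := by
  rw [nrm2, integral_norm_sq_kfun_zero, Real.sqrt_eq_rpow]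

theorem isProjK_mul_kfun_zero {ψ₁ ψ₂ : 𝕋 → ℂ} (hψ₁ : MemK Θ ψ₁) (hψ₂ : MemK Θ ψ₂) :
    IsProjK Θ (fun θ => (ψ₁ θ + ψ₂ θ * conj (Θ.toFun θ)) * kfun Θ 0 θ)
      (fun θ => ψ₁ θ - conj (Θ.dval 0) * ψ₂ θ) := by
  set c := Θ.dval 0
  refine ⟨hψ₁.sub (hψ₂.const_mul _), fun k hk => ?_⟩
  have hres : (fun θ => (ψ₁ θ + ψ₂ θ * conj (Θ.toFun θ)) * kfun Θ 0 θ
      - (ψ₁ θ - conj c * ψ₂ θ)) =ᵐ[μT]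
      fun θ => ψ₂ θ * conj (Θ.toFun θ) + -conj c * (Θ.toFun θ * ψ₁ θ) := by
    filter_upwards [Θ.mul_conj_ae] with θ hθ
    rw [kfun_zero]
    linear_combination (-conj c * ψ₂ θ) * hθ
  rw [ip_congr_ae_left hres, ip_add_left (InnerFn.memLp_mul_conj hψ₂.1.1)
    ((InnerFn.memLp_mul hψ₁.1.1).const_mul _) hk.1.1, ip_const_mul_left, ip_mul_conj_left,
    hψ₂.2 k hk.1, ← conj_ip, hk.2 ψ₁ hψ₁.1]
  simp

end Kernel

theorem ttNorm_lower_mixed_general (Θ : InnerFn) (ψ₁ ψ₂ : 𝕋 → ℂ)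
    (hψ₁ : MemK Θ ψ₁) (hψ₂ : MemK Θ ψ₂) (φ : 𝕋 → ℂ)
    (hφ : φ = fun θ => ψ₁ θ + ψ₂ θ * (starRingEnd ℂ) (Θ.toFun θ)) :
    ENNReal.ofReal (nrm2 (fun θ => ψ₁ θ - (starRingEnd ℂ) (Θ.dval 0) * ψ₂ θ) /
      Real.sqrt (1 - ‖Θ.dval 0‖ ^ 2)) ≤ ttNorm Θ φ := by
  subst hφ
  obtain hs | hs := (Real.sqrt_nonneg (1 - ‖Θ.dval 0‖ ^ 2)).eq_or_lt
  · simp [← hs] -- the left side is `ofReal (x / 0) = 0`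
  set s := √(1 - ‖Θ.dval 0‖ ^ 2)
  have hs_inv : ‖(s : ℂ)⁻¹‖ = s⁻¹ := by simp [s, hs.le]
  refine le_sSup ⟨fun θ => (s : ℂ)⁻¹ * kfun Θ 0 θ, _, (memK_kfun_zero Θ).const_mul _,
    (memLp_top_kfun_zero Θ).const_mul _, ?_,
    by simpa only [mul_left_comm] using (isProjK_mul_kfun_zero Θ hψ₁ hψ₂).const_mul (s : ℂ)⁻¹, ?_⟩
  · rw [nrm2_const_mul, hs_inv, nrm2_kfun_zero Θ, inv_mul_cancel₀ hs.ne']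
  · rw [nrm2_const_mul, hs_inv, inv_mul_eq_div]

/-- for `ψ₁, ψ₂ ∈ K_Θ` and `φ = ψ₁ + ψ₂ conj(Θ)`,
`‖ψ₁ - conj(Θ(0)) ψ₂‖ / (1-|Θ(0)|²)^{1/2} ≤ ‖A_φ‖`. -/
theorem ttNorm_lower_mixed (Θ : InnerFn) (hΘ : Θ.NonConst) (ψ₁ ψ₂ : 𝕋 → ℂ)
    (hψ₁ : MemK Θ ψ₁) (hψ₂ : MemK Θ ψ₂) (φ : 𝕋 → ℂ)
    (hφ : φ = fun θ => ψ₁ θ + ψ₂ θ * (starRingEnd ℂ) (Θ.toFun θ)) :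
    ENNReal.ofReal (nrm2 (fun θ => ψ₁ θ - (starRingEnd ℂ) (Θ.dval 0) * ψ₂ θ) /
      Real.sqrt (1 - ‖Θ.dval 0‖ ^ 2)) ≤ ttNorm Θ φ :=
  ttNorm_lower_mixed_general Θ ψ₁ ψ₂ hψ₁ hψ₂ φ hφ
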